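/- Let $S$ be a metrizable Choquet simplex and $s \in S$. Then $\mathrm{cone}(S,s)$, the closed convex hull of $(S \times \{0\}) \cup \{(s,1)\}$ in $S \times [0,1]$, is a Choquet simplex. -/

import Mathlib

open MeasureTheory

/-- `x` is the (weak) barycenter of the measure `μ`. -/
def IsBarycenter {E : Type*} [AddCommGroup E] [Module ℝ E] [TopologicalSpace E]
    [MeasurableSpace E] (μ : Measure E) (x : E) : Prop :=
  ∀ f : E →L[ℝ] ℝ, (∫ y, f y ∂μ) = f x

/-- A (metrizable) compact convex set is a Choquet simplex if every point is the
barycenter of a unique probability measure concentrated on the extreme points. -/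
def IsChoquetSimplex {E : Type*} [AddCommGroup E] [Module ℝ E]
    [TopologicalSpace E] [MeasurableSpace E] (K : Set E) : Prop :=
  IsCompact K ∧ Convex ℝ K ∧ ∀ x ∈ K, ∃! μ : Measure E,
    IsProbabilityMeasure μ ∧ μ (Set.extremePoints ℝ K)ᶜ = 0 ∧ IsBarycenter μ x

/-- The cone of `S` over `s`: the closed convex hull of `(S × {0}) ∪ {(s,1)}`
inside `E × ℝ`. -/
def coneSet {E : Type*} [AddCommGroup E] [Module ℝ E] [TopologicalSpace E]
    (S : Set E) (s : E) : Set (E × ℝ) :=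
  closure (convexHull ℝ (((fun x => (x, (0:ℝ))) '' S) ∪ {(s, (1:ℝ))}))

/-! The cone is the image of `S × [0, 1]` under `(y, t) ↦ (1 - t) • (y, 0) + t • (s, 1)`. The
levels `t = 0` and `t = 1` of the cone are faces, namely `S × {0}` and the apex `(s, 1)`, while a
point with `0 < t < 1` lies inside the segment from `(y, 0)` to the apex; so the extreme points of
the cone are `ext S × {0}` and the apex. A boundary measure on the cone is therefore
`c • δ_(s,1) + ρ.map (·, 0)` with `ρ` a boundary measure on `S`. If it represents
`(1 - t) • (y, 0) + t • (s, 1)`, testing against the second coordinate gives `c = t`, and testing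
against functionals of the first coordinate shows that `ρ` has mass `1 - t` and, once normalised,
represents `y`; uniqueness in `S` then determines `ρ`. -/

open Set
open scoped ENNReal

lemma isExtreme_sep_eq_of_forall_le {V : Type*} [AddCommGroup V] [Module ℝ V] {A : Set V}
    (l : V →ₗ[ℝ] ℝ) {c : ℝ} (hl : ∀ x ∈ A, l x ≤ c) :
    IsExtreme ℝ A {x ∈ A | l x = c} := by
  refine ⟨sep_subset _ _, fun x₁ hx₁ x₂ hx₂ x ⟨_, hx⟩ ⟨a, b, ha, hb, hab, hxab⟩ => ?_⟩
  have hcomb : a * l x₁ + b * l x₂ = c := by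
    rw [← hx, ← hxab, map_add, map_smul, map_smul, smul_eq_mul, smul_eq_mul]
  refine ⟨hx₁, le_antisymm (hl x₁ hx₁) ?_⟩
  obtain rfl : b = 1 - a := by linarith
  by_contra! hlt
  linarith [mul_pos ha (sub_pos.2 hlt), mul_nonneg hb.le (sub_nonneg.2 (hl x₂ hx₂))]

section Geometry

variable {E : Type*} [AddCommGroup E] [Module ℝ E] {S : Set E} {s : E}

lemma convexHull_prod_zero_union_singleton (hS : Convex ℝ S) (hs : s ∈ S) :
    convexHull ℝ (S ×ˢ {(0 : ℝ)} ∪ {(s, 1)}) =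
      (fun q : E × ℝ => (1 - q.2) • (q.1, (0 : ℝ)) + q.2 • (s, (1 : ℝ))) '' S ×ˢ Icc 0 1 := by
  rw [union_comm, ← insert_eq, convexHull_insert ⟨(s, 0), mk_mem_prod hs (mem_singleton 0)⟩,
    (hS.prod (convex_singleton 0)).convexHull_eq, convexJoin_singleton_left]
  ext p
  simp [segment_symm _ (s, (1:ℝ)), segment_eq_image, and_assoc]

variable [TopologicalSpace E] [IsTopologicalAddGroup E] [ContinuousSMul ℝ E] [T2Space E]

lemma coneSet_eq_image (hSc : IsCompact S) (hS : Convex ℝ S) (hs : s ∈ S) :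
    coneSet S s =
      (fun q : E × ℝ => (1 - q.2) • (q.1, (0 : ℝ)) + q.2 • (s, (1 : ℝ))) '' S ×ˢ Icc 0 1 := by
  rw [coneSet, ← prod_singleton, convexHull_prod_zero_union_singleton hS hs]
  exact ((hSc.prod isCompact_Icc).image (by fun_prop)).isClosed.closure_eq

lemma isCompact_coneSet (hSc : IsCompact S) (hS : Convex ℝ S) (hs : s ∈ S) :
    IsCompact (coneSet S s) := by
  rw [coneSet_eq_image hSc hS hs]
  exact (hSc.prod isCompact_Icc).image (by fun_prop)

lemma mem_coneSet (hSc : IsCompact S) (hS : Convex ℝ S) (hs : s ∈ S) {p : E × ℝ} :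
    p ∈ coneSet S s ↔ ∃ y ∈ S, ∃ t ∈ Icc (0 : ℝ) 1, (1 - t) • (y, (0 : ℝ)) + t • (s, 1) = p := by
  simp [coneSet_eq_image hSc hS hs, and_assoc]

lemma isExtreme_coneSet_prod_zero (hSc : IsCompact S) (hS : Convex ℝ S) (hs : s ∈ S) :
    IsExtreme ℝ (coneSet S s) (S ×ˢ {0}) := by
  have hnonneg : ∀ p ∈ coneSet S s, (-LinearMap.snd ℝ E ℝ) p ≤ 0 := by
    intro p hp
    obtain ⟨y, -, t, ht, rfl⟩ := (mem_coneSet hSc hS hs).1 hp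
    simpa using ht.1
  have hface : {p ∈ coneSet S s | (-LinearMap.snd ℝ E ℝ) p = 0} = S ×ˢ {0} := by
    ext p
    simp only [mem_ofPred, mem_coneSet hSc hS hs, LinearMap.neg_apply, LinearMap.snd_apply,
      neg_eq_zero, mem_prod, mem_singleton_iff]
    constructor
    · rintro ⟨⟨y, hy, t, -, rfl⟩, ht⟩
      obtain rfl : t = 0 := by simpa using ht
      simpa using hy
    · rintro ⟨hy, hp⟩
      exact ⟨⟨p.1, hy, 0, ⟨le_rfl, zero_le_one⟩, by simp [Prod.ext_iff, hp]⟩, hp⟩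
  exact hface ▸ isExtreme_sep_eq_of_forall_le _ hnonneg

lemma apex_mem_extremePoints_coneSet (hSc : IsCompact S) (hS : Convex ℝ S) (hs : s ∈ S) :
    (s, 1) ∈ (coneSet S s).extremePoints ℝ := by
  have hle : ∀ p ∈ coneSet S s, LinearMap.snd ℝ E ℝ p ≤ 1 := by
    intro p hp
    obtain ⟨y, -, t, ht, rfl⟩ := (mem_coneSet hSc hS hs).1 hp
    simpa using ht.2
  rw [← isExtreme_singleton]
  have hface : {p ∈ coneSet S s | LinearMap.snd ℝ E ℝ p = 1} = {(s, 1)} := by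
    ext p
    simp only [mem_ofPred, mem_coneSet hSc hS hs, LinearMap.snd_apply, mem_singleton_iff]
    constructor
    · rintro ⟨⟨y, hy, t, -, rfl⟩, ht⟩
      obtain rfl : t = 1 := by simpa using ht
      simp
    · rintro rfl
      exact ⟨⟨s, hs, 1, ⟨zero_le_one, le_rfl⟩, by simp⟩, rfl⟩
  exact hface ▸ isExtreme_sep_eq_of_forall_le _ hle

lemma extremePoints_coneSet (hSc : IsCompact S) (hS : Convex ℝ S) (hs : s ∈ S) :
    (coneSet S s).extremePoints ℝ = S.extremePoints ℝ ×ˢ {0} ∪ {(s, 1)} := by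
  have hbase := isExtreme_coneSet_prod_zero hSc hS hs
  refine Subset.antisymm (fun p hp => ?_) (union_subset ?_ ?_)
  · obtain ⟨y, hy, t, ⟨ht₀, ht₁⟩, rfl⟩ := (mem_coneSet hSc hS hs).1 hp.1
    rcases ht₀.eq_or_lt with rfl | ht₀
    · left
      have hmem : (y, (0 : ℝ)) ∈ (S ×ˢ {0}).extremePoints ℝ :=
        hbase.extremePoints_eq ▸ ⟨mk_mem_prod hy rfl, by simpa using hp⟩
      simpa using hmem
    rcases ht₁.eq_or_lt with rfl | ht₁
    · simp
    have hbase_mem : (y, (0 : ℝ)) ∈ coneSet S s := hbase.subset (mk_mem_prod hy rfl)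
    have h := congrArg Prod.snd <| hp.2 hbase_mem (apex_mem_extremePoints_coneSet hSc hS hs).1
      ⟨1 - t, t, by linarith, ht₀, by ring, rfl⟩
    exact absurd (by simpa using h) ht₀.ne
  · simpa using hbase.extremePoints_subset_extremePoints
  · simpa using apex_mem_extremePoints_coneSet hSc hS hs

end Geometry

lemma Continuous.integrable_of_measure_compl_eq_zero {X F : Type*} [TopologicalSpace X]
    [T2Space X] [MeasurableSpace X] [OpensMeasurableSpace X] [NormedAddCommGroup F]
    {μ : Measure X} [IsFiniteMeasure μ] {K : Set X} (hK : IsCompact K) (hμK : μ Kᶜ = 0)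
    {f : X → F} (hf : Continuous f) : Integrable f μ := by
  rw [← Measure.restrict_eq_self_of_ae_mem (ae_iff.2 hμK)]
  exact hf.continuousOn.integrableOn_compact hK

lemma MeasureTheory.Measure.eq_smul_dirac_add_map_comap {X Y : Type*} [MeasurableSpace X]
    [MeasurableSpace Y] [MeasurableSingletonClass X] {g : Y → X} (hg : MeasurableEmbedding g)
    {a : X} (ha : a ∉ range g) {μ : Measure X} (hμ : μ (insert a (range g))ᶜ = 0) :
    μ = μ {a} • dirac a + (μ.comap g).map g := by
  rw [hg.map_comap, ← Measure.restrict_singleton,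
    ← Measure.restrict_union (disjoint_singleton_left.2 ha) hg.measurableSet_range,
    ← insert_eq, Measure.restrict_eq_self_of_ae_mem (ae_iff.2 hμ)]

section ConeMeasure

variable {E : Type*} [MeasurableSpace E] {S : Set E} {s : E}

noncomputable def coneMeasure (s : E) (c : ℝ≥0∞) (ρ : Measure E) : Measure (E × ℝ) :=
  c • Measure.dirac (s, 1) + ρ.map (fun x => (x, (0 : ℝ)))

lemma coneMeasure_univ (c : ℝ≥0∞) (ρ : Measure E) : coneMeasure s c ρ univ = c + ρ univ := by
  simp [coneMeasure, Measure.map_apply measurable_prodMk_right MeasurableSet.univ]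

variable [TopologicalSpace E] [T2Space E] [OpensMeasurableSpace E] [AddCommGroup E] [Module ℝ E]

lemma integral_coneMeasure {c : ℝ≥0∞} (hc : c ≠ ⊤) {ρ : Measure E} [IsFiniteMeasure ρ]
    {K : Set E} (hK : IsCompact K) (hρK : ρ Kᶜ = 0) (f : E × ℝ →L[ℝ] ℝ) :
    ∫ p, f p ∂coneMeasure s c ρ = c.toReal * f (s, 1) + ∫ x, f (x, 0) ∂ρ := by
  have hint : Integrable (fun x => f (x, 0)) ρ :=
    (by fun_prop : Continuous fun x => f (x, 0)).integrable_of_measure_compl_eq_zero hK hρK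
  have hemb := measurableEmbedding_prod_mk_right (β := E) (0 : ℝ)
  rw [coneMeasure, integral_add_measure ((integrable_dirac (by simp)).smul_measure hc)
      (hemb.integrable_map_iff.2 hint),
    integral_smul_measure, integral_dirac, hemb.integral_map, smul_eq_mul]

variable [IsTopologicalAddGroup E] [ContinuousSMul ℝ E]

lemma coneMeasure_compl_extremePoints (hSc : IsCompact S) (hS : Convex ℝ S) (hs : s ∈ S)
    (c : ℝ≥0∞) (ρ : Measure E) :
    coneMeasure s c ρ ((coneSet S s).extremePoints ℝ)ᶜ = ρ (S.extremePoints ℝ)ᶜ := by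
  rw [coneMeasure, Measure.add_apply, Measure.smul_apply,
    (measurableEmbedding_prod_mk_right 0).map_apply, extremePoints_coneSet hSc hS hs]
  have hpre : (fun x => (x, (0 : ℝ))) ⁻¹' (S.extremePoints ℝ ×ˢ {0} ∪ {(s, 1)})ᶜ =
      (S.extremePoints ℝ)ᶜ := by
    ext x; simp
  rw [hpre]
  simp

lemma eq_coneMeasure_of_measure_compl_extremePoints (hSc : IsCompact S) (hS : Convex ℝ S)
    (hs : s ∈ S) {μ : Measure (E × ℝ)} (hμ : μ ((coneSet S s).extremePoints ℝ)ᶜ = 0) :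
    μ = coneMeasure s (μ {(s, 1)}) (μ.comap fun x => (x, (0 : ℝ))) := by
  refine μ.eq_smul_dirac_add_map_comap (measurableEmbedding_prod_mk_right 0) (a := (s, 1))
    (by simp) ?_
  refine measure_mono_null (compl_subset_compl.2 ?_) hμ
  rw [extremePoints_coneSet hSc hS hs]
  rintro p (⟨-, hp⟩ | hp)
  · exact mem_insert_of_mem _ ⟨p.1, by simpa [Prod.ext_iff] using hp.symm⟩
  · exact mem_insert_iff.2 (Or.inl hp)

end ConeMeasure

section Choquet

variable {E : Type*} [AddCommGroup E] [Module ℝ E] [TopologicalSpace E] [MeasurableSpace E]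

def IsBoundaryRepresentation (K : Set E) (x : E) (μ : Measure E) : Prop :=
  IsProbabilityMeasure μ ∧ μ (K.extremePoints ℝ)ᶜ = 0 ∧ IsBarycenter μ x

lemma eq_measure_univ_smul_of_integral_eq {K : Set E} {x : E} {ν : Measure E}
    (huniq : ∀ μ, IsBoundaryRepresentation K x μ → μ = ν) {ρ : Measure E} [IsFiniteMeasure ρ]
    (hρK : ρ (K.extremePoints ℝ)ᶜ = 0)
    (hρx : ∀ f : E →L[ℝ] ℝ, ∫ y, f y ∂ρ = (ρ univ).toReal * f x) :
    ρ = ρ univ • ν := by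
  rcases eq_or_ne (ρ univ) 0 with h0 | h0
  · rw [h0, zero_smul, Measure.measure_univ_eq_zero.1 h0]
  have hnorm : IsBoundaryRepresentation K x ((ρ univ)⁻¹ • ρ) := by
    refine ⟨⟨?_⟩, by simp [hρK], fun f => ?_⟩
    · simp [ENNReal.inv_mul_cancel h0 (measure_ne_top ρ univ)]
    · rw [integral_smul_measure, hρx, ENNReal.toReal_inv, smul_eq_mul, ← mul_assoc,
        inv_mul_cancel₀ (ENNReal.toReal_ne_zero.2 ⟨h0, measure_ne_top ρ univ⟩), one_mul]
  rw [← huniq _ hnorm, smul_smul, ENNReal.mul_inv_cancel h0 (measure_ne_top ρ univ), one_smul]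

end Choquet

section ConeRepresentation

variable {E : Type*} [AddCommGroup E] [Module ℝ E] [TopologicalSpace E] [IsTopologicalAddGroup E]
  [ContinuousSMul ℝ E] [T2Space E] [MeasurableSpace E] [OpensMeasurableSpace E]
  {S : Set E} {s y : E} {t : ℝ} {ν : Measure E}

lemma isBoundaryRepresentation_coneMeasure (hSc : IsCompact S) (hS : Convex ℝ S) (hs : s ∈ S)
    (ht : t ∈ Icc (0 : ℝ) 1) (hν : IsBoundaryRepresentation S y ν) :
    IsBoundaryRepresentation (coneSet S s) ((1 - t) • (y, 0) + t • (s, 1))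
      (coneMeasure s (ENNReal.ofReal t) (ENNReal.ofReal (1 - t) • ν)) := by
  obtain ⟨hνprob, hνext, hνbar⟩ := hν
  have hνS : ν Sᶜ = 0 := measure_mono_null (compl_subset_compl.2 extremePoints_subset) hνext
  have hbase : ∀ f : E × ℝ →L[ℝ] ℝ, ∫ x, f (x, 0) ∂ν = f (y, 0) := fun f => by
    simpa using hνbar (f.comp (.inl ℝ E ℝ))
  refine ⟨⟨?_⟩, ?_, fun f => ?_⟩
  · rw [coneMeasure_univ, Measure.smul_apply, measure_univ, smul_eq_mul, mul_one,
      ← ENNReal.ofReal_add ht.1 (sub_nonneg.2 ht.2)]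
    simp
  · rw [coneMeasure_compl_extremePoints hSc hS hs, Measure.smul_apply, hνext, smul_zero]
  · have : IsFiniteMeasure (ENNReal.ofReal (1 - t) • ν) := ⟨by simp⟩
    rw [integral_coneMeasure ENNReal.ofReal_ne_top hSc (by simp [hνS]) f, integral_smul_measure,
      hbase, ENNReal.toReal_ofReal ht.1, ENNReal.toReal_ofReal (sub_nonneg.2 ht.2), map_add,
      map_smul, map_smul, smul_eq_mul, smul_eq_mul, add_comm]

lemma eq_coneMeasure_of_isBoundaryRepresentation (hSc : IsCompact S) (hS : Convex ℝ S)
    (hs : s ∈ S) (huniq : ∀ ν', IsBoundaryRepresentation S y ν' → ν' = ν) {μ : Measure (E × ℝ)}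
    (hμ : IsBoundaryRepresentation (coneSet S s) ((1 - t) • (y, 0) + t • (s, 1)) μ) :
    μ = coneMeasure s (ENNReal.ofReal t) (ENNReal.ofReal (1 - t) • ν) := by
  obtain ⟨hμprob, hμext, hμbar⟩ := hμ
  obtain ⟨c, ρ, rfl⟩ : ∃ c ρ, μ = coneMeasure s c ρ :=
    ⟨_, _, eq_coneMeasure_of_measure_compl_extremePoints hSc hS hs hμext⟩
  have hmass : c + ρ univ = 1 := by rw [← coneMeasure_univ (s := s)]; exact measure_univ
  have hc : c ≠ ⊤ := ne_top_of_le_ne_top ENNReal.one_ne_top (hmass ▸ le_self_add)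
  have hρ : ρ univ ≠ ⊤ := ne_top_of_le_ne_top ENNReal.one_ne_top (hmass ▸ le_add_self)
  have : IsFiniteMeasure ρ := ⟨hρ.lt_top⟩
  have hρext : ρ (S.extremePoints ℝ)ᶜ = 0 := coneMeasure_compl_extremePoints hSc hS hs c ρ ▸ hμext
  have hρS : ρ Sᶜ = 0 := measure_mono_null (compl_subset_compl.2 extremePoints_subset) hρext
  have hbar (f : E × ℝ →L[ℝ] ℝ) :
      c.toReal * f (s, 1) + ∫ x, f (x, 0) ∂ρ = f ((1 - t) • (y, 0) + t • (s, 1)) :=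
    (integral_coneMeasure hc hSc hρS f).symm.trans (hμbar f)
  have hct : c.toReal = t := by simpa using hbar (.snd ℝ E ℝ)
  have hρt : (ρ univ).toReal = 1 - t := by
    have := congrArg ENNReal.toReal hmass
    rw [ENNReal.toReal_add hc hρ, ENNReal.toReal_one, hct] at this
    linarith
  have hρy (g : E →L[ℝ] ℝ) : ∫ x, g x ∂ρ = (ρ univ).toReal * g y := by
    have := hbar (g.comp (.fst ℝ E ℝ))
    simp only [hct, ContinuousLinearMap.comp_apply, ContinuousLinearMap.coe_fst', Prod.smul_mk,
      smul_eq_mul, mul_zero, mul_one, Prod.mk_add_mk, zero_add, map_add, map_smul] at this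
    rw [hρt]
    linarith
  rw [eq_measure_univ_smul_of_integral_eq huniq hρext hρy]
  congr 1
  · rw [← hct, ENNReal.ofReal_toReal hc]
  · rw [← hρt, ENNReal.ofReal_toReal hρ]

end ConeRepresentation

theorem stmt_16_general {E : Type*}
    [AddCommGroup E] [Module ℝ E] [TopologicalSpace E] [IsTopologicalAddGroup E]
    [ContinuousSMul ℝ E] [T2Space E]
    [MeasurableSpace E] [BorelSpace E]
    (S : Set E) (hS : IsChoquetSimplex S) (s : E) (hs : s ∈ S) :
    IsChoquetSimplex (coneSet S s) := by
  obtain ⟨hSc, hSconv, hrep⟩ := hS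
  refine ⟨isCompact_coneSet hSc hSconv hs, (convex_convexHull ℝ _).closure, fun z hz => ?_⟩
  obtain ⟨y, hy, t, ht, rfl⟩ := (mem_coneSet hSc hSconv hs).1 hz
  obtain ⟨ν, hν, huniq⟩ := hrep y hy
  exact ⟨_, isBoundaryRepresentation_coneMeasure hSc hSconv hs ht hν,
    fun μ hμ => eq_coneMeasure_of_isBoundaryRepresentation hSc hSconv hs huniq hμ⟩

/-- The cone over a point of a metrizable Choquet simplex is a Choquet simplex. -/
theorem stmt_16 {E : Type*}
    [AddCommGroup E] [Module ℝ E] [TopologicalSpace E] [IsTopologicalAddGroup E]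
    [ContinuousSMul ℝ E] [LocallyConvexSpace ℝ E] [T2Space E]
    [TopologicalSpace.MetrizableSpace E] [SecondCountableTopology E]
    [MeasurableSpace E] [BorelSpace E]
    (S : Set E) (hS : IsChoquetSimplex S) (s : E) (hs : s ∈ S) :
    IsChoquetSimplex (coneSet S s) :=
  stmt_16_general S hS s hs
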